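/- Let n ≥ 3 be odd and let Φ_J = I₃ (the 3×3 identity matrix, the maximally entangled state of the bipartite n-gon model). For any effects E₁⁺, E₂⁺, F₁⁺, F₂⁺, each belonging to the set {e_1,…,e_n, ē_1,…,ē_n} of extreme effects, set E₂⁻ = u − E₂⁺ and F₂⁻ = u − F₂⁺. If the three Hardy zero conditions hold, namely E₁⁺ᵀ Φ_J F₂⁺ = 0, E₂⁺ᵀ Φ_J F₁⁺ = 0 and E₂⁻ᵀ Φ_J F₂⁻ = 0, then the Hardy success probability satisfies E₁⁺ᵀ Φ_J F₁⁺ = 0. In other words, the maximally entangled state of a bipartite odd n-gon system never exhibits Hardy's nonlocality. -/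
import Mathlib


open Real Matrix

/-- `r_n = sqrt(sec(π/n))`. -/
noncomputable def rpoly (n : ℕ) : ℝ := Real.sqrt (1 / Real.cos (Real.pi / n))

/-- Ray-extremal effects of the odd `n`-gon model:
`e_i = (1/(1+r_n²))·(r_n cos(2πi/n), r_n sin(2πi/n), 1)ᵀ`. -/
noncomputable def eOdd (n i : ℕ) : Fin 3 → ℝ :=
  (1 / (1 + rpoly n ^ 2)) •
    ![rpoly n * Real.cos (2 * Real.pi * i / n), rpoly n * Real.sin (2 * Real.pi * i / n), 1]

/-- The unit effect `u = (0,0,1)ᵀ`. -/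
noncomputable def uEff : Fin 3 → ℝ := ![0, 0, 1]

/-- Probability of local effects `E` (Alice) and `F` (Bob) on a bipartite state `Φ`:
`P_Φ(E,F) = Eᵀ Φ F`. -/
noncomputable def prob (Φ : Matrix (Fin 3) (Fin 3) ℝ) (E F : Fin 3 → ℝ) : ℝ :=
  E ⬝ᵥ Φ.mulVec F

/-- `E` is an extreme effect of the odd `n`-gon model: one of `e_1,…,e_n, ē_1,…,ē_n`. -/
def IsExtremeEffect (n : ℕ) (E : Fin 3 → ℝ) : Prop :=
  ∃ i ∈ Finset.Icc 1 n, E = eOdd n i ∨ E = uEff - eOdd n i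

lemma pi_div_lt (n : ℕ) (hn : 3 ≤ n) : 0 < Real.pi / n ∧ Real.pi / n < Real.pi / 2 := by
  have hπ := Real.pi_pos
  have hn' : (3:ℝ) ≤ n := by exact_mod_cast hn
  constructor
  · positivity
  · calc Real.pi / n ≤ Real.pi / 3 := by
          apply div_le_div_of_nonneg_left hπ.le (by norm_num) hn'
        _ < Real.pi / 2 := by linarith

lemma cos_pos' (n : ℕ) (hn : 3 ≤ n) : 0 < Real.cos (Real.pi / n) := by
  obtain ⟨h1, h2⟩ := pi_div_lt n hn
  exact Real.cos_pos_of_mem_Ioo ⟨by linarith [Real.pi_pos], h2⟩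

lemma cos_lt_one' (n : ℕ) (hn : 3 ≤ n) : Real.cos (Real.pi / n) < 1 := by
  obtain ⟨h1, h2⟩ := pi_div_lt n hn
  have := Real.cos_lt_cos_of_nonneg_of_le_pi le_rfl (by linarith [Real.pi_pos]) h1
  simpa using this

lemma rpoly_sq (n : ℕ) (hn : 3 ≤ n) :
    rpoly n ^ 2 = 1 / Real.cos (Real.pi / n) := by
  have := cos_pos' n hn
  rw [rpoly, Real.sq_sqrt (by positivity)]

lemma one_lt_rpoly_sq (n : ℕ) (hn : 3 ≤ n) : 1 < rpoly n ^ 2 := by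
  rw [rpoly_sq n hn]
  have h0 := cos_pos' n hn
  have h1 := cos_lt_one' n hn
  rw [lt_div_iff₀ h0]; linarith

lemma dot_ee (n i j : ℕ) :
    eOdd n i ⬝ᵥ eOdd n j = (1 / (1 + rpoly n ^ 2))^2 *
      (rpoly n ^ 2 * Real.cos (2 * Real.pi * i / n - 2 * Real.pi * j / n) + 1) := by
  have key : ∀ (c r a b : ℝ),
      (c • ![r * Real.cos a, r * Real.sin a, 1]) ⬝ᵥ (c • ![r * Real.cos b, r * Real.sin b, 1])
        = c ^ 2 * (r ^ 2 * Real.cos (a - b) + 1) := by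
    intro c r a b
    simp [dotProduct, Fin.sum_univ_three, Real.cos_sub]
    ring
  exact key _ _ _ _

lemma dot_ue (n i : ℕ) : uEff ⬝ᵥ eOdd n i = 1 / (1 + rpoly n ^ 2) := by
  simp [eOdd, uEff, dotProduct, Fin.sum_univ_three]

lemma dot_eu (n i : ℕ) : eOdd n i ⬝ᵥ uEff = 1 / (1 + rpoly n ^ 2) := by
  simp [eOdd, uEff, dotProduct, Fin.sum_univ_three]

lemma dot_uu : uEff ⬝ᵥ uEff = 1 := by
  simp [uEff, dotProduct, Fin.sum_univ_three]

-- ē_i ⬝ ē_j > 0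
lemma ebar_dot_ebar_pos (n i j : ℕ) (hn : 3 ≤ n) :
    0 < (uEff - eOdd n i) ⬝ᵥ (uEff - eOdd n j) := by
  have hR := one_lt_rpoly_sq n hn
  set R := rpoly n ^ 2 with hRdef
  have hs : (0:ℝ) < 1 + R := by linarith
  have hc := Real.neg_one_le_cos (2 * Real.pi * i / n - 2 * Real.pi * j / n)
  have expand : (uEff - eOdd n i) ⬝ᵥ (uEff - eOdd n j)
      = uEff ⬝ᵥ uEff - uEff ⬝ᵥ eOdd n j - eOdd n i ⬝ᵥ uEff + eOdd n i ⬝ᵥ eOdd n j := by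
    simp [sub_dotProduct, dotProduct_sub]; ring
  rw [expand, dot_uu, dot_ue, dot_eu, dot_ee]
  rw [div_pow, one_pow]
  rw [show (1:ℝ) - 1/(1+R) - 1/(1+R) + 1/(1+R)^2 * (R * Real.cos (2 * Real.pi * i / n - 2 * Real.pi * j / n) + 1)
      = (R * (R + Real.cos (2 * Real.pi * i / n - 2 * Real.pi * j / n))) / (1+R)^2 by
    field_simp; ring]
  apply div_pos (mul_pos (by linarith) (by linarith)) (by positivity)

lemma cos_eq_one_imp (a b : ℝ) (h : Real.cos (a - b) = 1) :
    Real.cos a = Real.cos b ∧ Real.sin a = Real.sin b := by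
  have h1 := Real.sin_sq_add_cos_sq a
  have h2 := Real.sin_sq_add_cos_sq b
  rw [Real.cos_sub] at h
  constructor <;>
    nlinarith [sq_nonneg (Real.cos a - Real.cos b), sq_nonneg (Real.sin a - Real.sin b)]

lemma e_vec_eq (n i j : ℕ) (hn : 3 ≤ n) (h : eOdd n i ⬝ᵥ (uEff - eOdd n j) = 0) :
    eOdd n i = eOdd n j := by
  have hR := one_lt_rpoly_sq n hn
  set R := rpoly n ^ 2 with hRdef
  have hs : (0:ℝ) < 1 + R := by linarith
  rw [dotProduct_sub, dot_eu, dot_ee, ← hRdef] at h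
  set K := Real.cos (2 * Real.pi * i / n - 2 * Real.pi * j / n) with hK
  have h' : R * (1 - K) / (1 + R)^2 = 0 := by
    rw [← h]; field_simp; ring
  have hz : R * (1 - K) = 0 := by
    have := (div_eq_zero_iff.mp h').resolve_right (by positivity)
    exact this
  have hcos : K = 1 := by
    rcases mul_eq_zero.mp hz with h0 | h0
    · linarith
    · linarith
  obtain ⟨hc, hsin⟩ := cos_eq_one_imp _ _ hcos
  unfold eOdd
  rw [hc, hsin]


lemma claimX (n i : ℕ) (hn : 3 ≤ n) (F : Fin 3 → ℝ) (hF : IsExtremeEffect n F)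
    (h : F ⬝ᵥ (uEff - eOdd n i) = 0) : F = eOdd n i := by
  obtain ⟨j, _, hFe | hFe⟩ := hF <;> subst hFe
  · exact e_vec_eq n j i hn h
  · exact absurd h (ebar_dot_ebar_pos n j i hn).ne'

lemma claimX' (n i : ℕ) (hn : 3 ≤ n) (F : Fin 3 → ℝ) (hF : IsExtremeEffect n F)
    (h : (uEff - eOdd n i) ⬝ᵥ F = 0) : F = eOdd n i :=
  claimX n i hn F hF (by rwa [dotProduct_comm])



/-- for odd `n ≥ 3` and `Φ_J = I₃`, if the three Hardy zero conditions hold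
for extreme effects, then the Hardy success probability vanishes: the maximally entangled
state of a bipartite odd `n`-gon never exhibits Hardy's nonlocality. -/
theorem odd_gon_max_entangled_no_hardy
    (n : ℕ) (hn : 3 ≤ n) (hodd : Odd n)
    (E1p E2p F1p F2p : Fin 3 → ℝ)
    (hE1 : IsExtremeEffect n E1p) (hE2 : IsExtremeEffect n E2p)
    (hF1 : IsExtremeEffect n F1p) (hF2 : IsExtremeEffect n F2p)
    (h2 : prob (1 : Matrix (Fin 3) (Fin 3) ℝ) E1p F2p = 0)
    (h3 : prob (1 : Matrix (Fin 3) (Fin 3) ℝ) E2p F1p = 0)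
    (h4 : prob (1 : Matrix (Fin 3) (Fin 3) ℝ) (uEff - E2p) (uEff - F2p) = 0) :
    prob (1 : Matrix (Fin 3) (Fin 3) ℝ) E1p F1p = 0 := by
  simp only [prob, Matrix.one_mulVec] at h2 h3 h4 ⊢
  obtain ⟨a, _, hA | hA⟩ := hE2 <;> obtain ⟨b, _, hB | hB⟩ := hF2 <;> subst hA <;> subst hB
  · -- E2 = e_a, F2 = e_b : h4 contradicts positivity
    exact absurd h4 (ebar_dot_ebar_pos n a b hn).ne'
  · -- E2 = e_a, F2 = ē_b
    rw [sub_sub_cancel] at h4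
    have hba : eOdd n b = eOdd n a :=
      e_vec_eq n b a hn (by rwa [dotProduct_comm] at h4)
    have hE1e : E1p = eOdd n b := claimX n b hn E1p hE1 h2
    rw [hE1e, hba]; exact h3
  · -- E2 = ē_a, F2 = e_b
    rw [sub_sub_cancel] at h4
    have hab : eOdd n a = eOdd n b := e_vec_eq n a b hn h4
    have hF1e : F1p = eOdd n a := claimX' n a hn F1p hF1 h3
    rw [hF1e, hab]; exact h2
  · -- E2 = ē_a, F2 = ē_b
    rw [sub_sub_cancel, sub_sub_cancel] at h4
    have hE1e : E1p = eOdd n b := claimX n b hn E1p hE1 h2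
    have hF1e : F1p = eOdd n a := claimX' n a hn F1p hF1 h3
    rw [hE1e, hF1e, dotProduct_comm]; exact h4
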